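/- Let 𝔊 = (D,B) be an mDAG whose simplicial complex B contains two disjoint facets C and D_f satisfying: (1) for each d ∈ D_f, every element of C and every parent (in D) of an element of C is a parent of d, and (2) for every c ∈ C, C is the only facet of B containing c. Let 𝔊' be 𝔊 with the facet C ∪ D_f (and all its subsets) added to the simplicial complex, and let 𝔊'' be 𝔊' with every directed edge c→d (c ∈ C, d ∈ D_f) removed. Then 𝔊' and 𝔊'' are observationally equivalent (so that Evans' rule is subsumed by weak facet-merging followed by the HLP edge-adding rule). -/

import Mathlib

/-!
Realizability by `G''` gives realizability by `G'`, which has the same latents and more edges.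
Conversely, take a model of `G'` and let `M` be the latent of the facet `C ∪ Df`, the only latent
parent of the nodes of `C`. Let `M` also draw an independent copy of the errors of the nodes of
`C` and let these nodes read their errors from `M`: the distribution is unchanged, and every
`c ∈ C` becomes a function of its parents. Every `d ∈ Df` sees `M` and all the other parents of
the nodes of `C`, so it can recompute their values by unrolling their structural equations along
a topological order, and the edges `c → d` become superfluous.
-/

open scoped Classical

/-! ## Basic structures: pDAGs and mDAGs -/

/-- A partitioned directed acyclic graph (pDAG) with visible node type `V` and
latent node type `L`.  Acyclicity is phrased via the existence of a topological
rank function, which for finite graphs is equivalent to the absence of directed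
cycles. -/
structure pDAG (V L : Type) where
  edge : V ⊕ L → V ⊕ L → Prop
  acyclic : ∃ rank : V ⊕ L → ℕ, ∀ a b, edge a b → rank a < rank b

/-- `P` is a probability distribution on a finite type. -/
def IsDist {α : Type} [Fintype α] (P : α → ℝ) : Prop :=
  (∀ x, 0 ≤ P x) ∧ ∑ x, P x = 1

/-- The joint assignment of outcomes to all (visible and latent) nodes obtained
from an assignment `xv` to the visible nodes and `xl` to the latent nodes. -/
def jointVal {V L : Type} (c : V → ℕ) (k : L → ℕ)
    (xv : (v : V) → Fin (c v)) (xl : (l : L) → Fin (k l)) :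
    (a : V ⊕ L) → Fin (Sum.elim c k a)
  | Sum.inl v => xv v
  | Sum.inr l => xl l

/-- A probability distribution `P` over the visible variables (with cardinalities `c`)
is realizable by the pDAG `G` (with classical unrestricted semantics, arbitrary finite
cardinalities of the latent variables) if there are latent cardinalities `k`, error
cardinalities `e`, error distributions `PE` and functions `f` (each depending only on
the values of the parents and the local error variable) whose induced marginal on the
visible variables is `P`. -/
def pDAG.Realizable {V L : Type} [Fintype V] [Fintype L] [DecidableEq V] [DecidableEq L]
    (G : pDAG V L) (c : V → ℕ) (P : ((v : V) → Fin (c v)) → ℝ) : Prop :=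
  IsDist P ∧
  ∃ (k : L → ℕ) (e : V ⊕ L → ℕ)
    (PE : (a : V ⊕ L) → Fin (e a) → ℝ)
    (f : (a : V ⊕ L) → ((b : V ⊕ L) → Fin (Sum.elim c k b)) → Fin (e a) →
      Fin (Sum.elim c k a)),
    (∀ a, IsDist (PE a)) ∧
    (∀ a g g' ε, (∀ b, G.edge b a → g b = g' b) → f a g ε = f a g' ε) ∧
    ∀ xv : (v : V) → Fin (c v),
      P xv = ∑ xl : (l : L) → Fin (k l), ∑ ε : (a : V ⊕ L) → Fin (e a),
        ∏ a : V ⊕ L,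
          (if jointVal c k xv xl a = f a (jointVal c k xv xl) (ε a) then (1:ℝ) else 0)
            * PE a (ε a)

/-- `G` observationally dominates `G'`: for every assignment of finite cardinalities to
the visible variables, every distribution realizable by `G'` is realizable by `G`. -/
def pDAG.ObsDominates {V L L' : Type} [Fintype V] [Fintype L] [Fintype L']
    [DecidableEq V] [DecidableEq L] [DecidableEq L']
    (G : pDAG V L) (G' : pDAG V L') : Prop :=
  ∀ (c : V → ℕ) (P : ((v : V) → Fin (c v)) → ℝ), G'.Realizable c P → G.Realizable c P

/-- An mDAG: a DAG on the node type `V` together with a simplicial complex on `V`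
(a family of finite subsets containing all singletons and closed under subsets). -/
structure mDAG (V : Type) where
  edge : V → V → Prop
  acyclic : ∃ rank : V → ℕ, ∀ a b, edge a b → rank a < rank b
  faces : Finset (Finset V)
  singleton_mem : ∀ v : V, {v} ∈ faces
  down_closed : ∀ A B : Finset V, A ⊆ B → B ∈ faces → A ∈ faces

namespace mDAG

variable {V : Type}

/-- A facet is an inclusion-maximal face of the simplicial complex. -/
def IsFacet (G : mDAG V) (A : Finset V) : Prop :=
  A ∈ G.faces ∧ ∀ B ∈ G.faces, A ⊆ B → A = B

/-- An mDAG is confounder-free if every facet of its simplicial complex is a singleton. -/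
def ConfounderFree (G : mDAG V) : Prop :=
  ∀ A : Finset V, G.IsFacet A → ∃ v : V, A = {v}

/-- An mDAG is directed-edge-free if its directed structure has no edges. -/
def DirectedEdgeFree (G : mDAG V) : Prop :=
  ∀ a b : V, ¬ G.edge a b

/-- `G` structurally dominates `G'` if the directed edges of `G'` are a subset of those
of `G` and the simplicial complex of `G'` is contained in that of `G`. -/
def StructDominates (G G' : mDAG V) : Prop :=
  (∀ a b : V, G'.edge a b → G.edge a b) ∧ G'.faces ⊆ G.faces

/-- The type of facets of an mDAG. -/
def Facets (G : mDAG V) : Type := {A : Finset V // G.IsFacet A}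

noncomputable instance instFintypeFacets [Fintype V] [DecidableEq V] (G : mDAG V) :
    Fintype G.Facets := Subtype.fintype _

noncomputable instance instDecidableEqFacets (G : mDAG V) :
    DecidableEq G.Facets := Classical.decEq _

/-- The canonical pDAG of an mDAG: the visible nodes carry the directed structure, and
there is one exogenous latent node per facet, whose children are exactly the members
of that facet. -/
def canon (G : mDAG V) : pDAG V G.Facets where
  edge a b :=
    match a, b with
    | Sum.inl u, Sum.inl v => G.edge u v
    | Sum.inr A, Sum.inl v => v ∈ A.1
    | _, Sum.inr _ => False
  acyclic := by
    obtain ⟨r, hr⟩ := G.acyclic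
    refine ⟨Sum.elim (fun v => r v + 1) (fun _ => 0), ?_⟩
    rintro (u | A) (v | B) h
    · simpa using hr u v h
    · exact h.elim
    · simp
    · exact h.elim

/-- Realizability of a distribution over the visible variables by an mDAG (via its
canonical pDAG). -/
def Realizable [Fintype V] [DecidableEq V] (G : mDAG V) (c : V → ℕ)
    (P : ((v : V) → Fin (c v)) → ℝ) : Prop :=
  G.canon.Realizable c P

/-- Observational dominance of mDAGs: for every assignment of finite cardinalities to
the visible nodes, every distribution realizable by `G'` is realizable by `G`. -/
def ObsDominates [Fintype V] [DecidableEq V] (G G' : mDAG V) : Prop :=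
  ∀ (c : V → ℕ) (P : ((v : V) → Fin (c v)) → ℝ), G'.Realizable c P → G.Realizable c P

/-- Observational equivalence of mDAGs. -/
def ObsEquiv [Fintype V] [DecidableEq V] (G G' : mDAG V) : Prop :=
  ∀ (c : V → ℕ) (P : ((v : V) → Fin (c v)) → ℝ), G.Realizable c P ↔ G'.Realizable c P

/-- Consistency with the fixed nodal ordering given by the order on `V`:
a later node is never an ancestor of an earlier node. -/
def OrderConsistent [LT V] (G : mDAG V) : Prop :=
  ∀ i j : V, i < j → ¬ Relation.TransGen G.edge j i

/-- `G'` is obtained from `G` by relabelling the nodes with the permutation `π`. -/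
def IsRelabel (π : Equiv.Perm V) (G G' : mDAG V) : Prop :=
  (∀ a b : V, G'.edge (π a) (π b) ↔ G.edge a b) ∧
  G'.faces = G.faces.image (Finset.image π)

/-- Adjacency in the skeleton of an mDAG: a directed edge in either direction, or
joint membership in some face of the simplicial complex. -/
def skelAdj (G : mDAG V) (u w : V) : Prop :=
  G.edge u w ∨ G.edge w u ∨ ∃ A ∈ G.faces, u ∈ A ∧ w ∈ A

end mDAG

/-! ## d-separation and e-separation -/

/-- Undirected adjacency underlying a directed graph. -/
def AdjRel {N : Type} (E : N → N → Prop) (a b : N) : Prop := E a b ∨ E b a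

/-- The middle node `y` of a consecutive triple `(x, y, z)` of a path does not block the
path given the conditioning set `C`: if `y` is a collider it has a descendant in `C`
(possibly itself), and if it is a non-collider it is not in `C`. -/
def ActiveTriple {N : Type} (E : N → N → Prop) (C : Set N) (x y z : N) : Prop :=
  ((E x y ∧ E z y) ∧ ∃ d ∈ C, Relation.ReflTransGen E y d) ∨
  (¬(E x y ∧ E z y) ∧ y ∉ C)

/-- Every consecutive triple of the path is active given the conditioning set `C`. -/
def TriplesActive {N : Type} (E : N → N → Prop) (C : Set N) : List N → Prop
  | x :: y :: z :: rest => ActiveTriple E C x y z ∧ TriplesActive E C (y :: z :: rest)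
  | _ => True

/-- `A` and `B` are d-connected given `C`: there is a (repetition-free, undirected)
path from a node of `A` to a node of `B` that is not blocked by `C`. -/
def DConnected {N : Type} (E : N → N → Prop) (A B C : Set N) : Prop :=
  ∃ p : List N, p.Chain' (AdjRel E) ∧ p.Nodup ∧
    (∃ a ∈ A, p.head? = some a) ∧ (∃ b ∈ B, p.getLast? = some b) ∧
    TriplesActive E C p

/-- d-separation: every undirected path from `A` to `B` is blocked by `C`. -/
def DSeparated {N : Type} (E : N → N → Prop) (A B C : Set N) : Prop :=
  ¬ DConnected E A B C

namespace mDAG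

variable {V : Type}

/-- d-separation of sets of (visible) nodes of an mDAG, evaluated in its canonical pDAG. -/
def dsep (G : mDAG V) (A B C : Set V) : Prop :=
  DSeparated G.canon.edge (Sum.inl '' A) (Sum.inl '' B) (Sum.inl '' C)

end mDAG

/-- The edge relation of a pDAG after deletion of the visible nodes in `D`. -/
def delEdge {V L : Type} (E : V ⊕ L → V ⊕ L → Prop) (D : Set V) (a b : V ⊕ L) : Prop :=
  E a b ∧ (∀ v, a = Sum.inl v → v ∉ D) ∧ (∀ v, b = Sum.inl v → v ∉ D)

namespace mDAG

variable {V : Type}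

/-- e-separation: `A` and `B` are e-separated by `C` after deletion of `D` if they are
d-separated by `C` in the subgraph of the canonical pDAG obtained by deleting the nodes
in `D`. -/
def eSep (G : mDAG V) (A B C D : Set V) : Prop :=
  DSeparated (delEdge G.canon.edge D) (Sum.inl '' A) (Sum.inl '' B) (Sum.inl '' C)

end mDAG

/-! ## Conditional independence -/

/-- The probability that the variables in `S` take the values specified by `g`. -/
noncomputable def margProb {V : Type} [Fintype V] [DecidableEq V] (c : V → ℕ)
    (P : ((v : V) → Fin (c v)) → ℝ) (S : Set V) (g : (v : V) → Fin (c v)) : ℝ :=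
  ∑ x : (v : V) → Fin (c v), if ∀ v ∈ S, x v = g v then P x else 0

/-- `X_A ⊥⊥ X_B | X_C` in the distribution `P`:
`P(X_A X_B | X_C) = P(X_A | X_C) P(X_B | X_C)` whenever the conditioning event has
positive probability. -/
def CondIndep {V : Type} [Fintype V] [DecidableEq V] (c : V → ℕ)
    (P : ((v : V) → Fin (c v)) → ℝ) (A B C : Set V) : Prop :=
  ∀ g : (v : V) → Fin (c v), 0 < margProb c P C g →
    margProb c P (A ∪ B ∪ C) g * margProb c P C g
      = margProb c P (A ∪ C) g * margProb c P (B ∪ C) g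

/-! ## Districts, closures and densely connected pairs -/

namespace mDAG

variable {V : Type}

/-- One step of connection through a common face, within the node subset `S`. -/
def faceStep (G : mDAG V) (S : Set V) (x y : V) : Prop :=
  x ∈ S ∧ y ∈ S ∧ ∃ F ∈ G.faces, x ∈ F ∧ y ∈ F

/-- The district of the set `A` in the sub-mDAG induced on `S`. -/
def disIn (G : mDAG V) (S A : Set V) : Set V :=
  {w | ∃ a ∈ A, Relation.ReflTransGen (G.faceStep S) a w}

/-- The ancestors of the set `A` (including `A` itself) in the directed structure
restricted to `S`. -/
def anIn (G : mDAG V) (S A : Set V) : Set V :=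
  {w | ∃ a ∈ A, Relation.ReflTransGen (fun x y => x ∈ S ∧ y ∈ S ∧ G.edge x y) w a}

/-- The alternating sequence of district and ancestor restrictions used to define
the closure of a set of nodes. -/
def closureSeq (G : mDAG V) (A : Set V) : ℕ → Set V
  | 0 => Set.univ
  | n + 1 =>
      if n % 2 = 0 then G.disIn (G.closureSeq A n) A else G.anIn (G.closureSeq A n) A

/-- The closure of a set of nodes: the limit (intersection) of the decreasing
alternating sequence. -/
def closure (G : mDAG V) (A : Set V) : Set V := ⋂ n, G.closureSeq A n

/-- `S` is bidirected-connected: it forms a single district of the induced sub-mDAG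
on `S`. -/
def BidirConnected (G : mDAG V) (S : Set V) : Prop :=
  ∀ u ∈ S, ∀ w ∈ S, Relation.ReflTransGen (G.faceStep S) u w

/-- Two distinct nodes `v`, `w` are densely connected. -/
def DenselyConnected (G : mDAG V) (v w : V) : Prop :=
  (∃ u ∈ G.closure {w}, G.edge v u) ∨
  (∃ u ∈ G.closure {v}, G.edge w u) ∨
  G.BidirConnected (G.closure {v, w})

/-- `S` is a realizable support of the mDAG `G` at cardinalities `c`: some distribution
realizable by `G` at `c` has support exactly `S`. -/
def RealizableSupport [Fintype V] [DecidableEq V] (G : mDAG V) (c : V → ℕ)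
    (S : Set ((v : V) → Fin (c v))) : Prop :=
  ∃ P : ((v : V) → Fin (c v)) → ℝ, G.Realizable c P ∧ ∀ x, x ∈ S ↔ 0 < P x

end mDAG

section FiniteDistributions

variable {ι : Type} [Fintype ι]

lemma IsDist.exists_ne_zero {P : ι → ℝ} (hP : IsDist P) : ∃ x, P x ≠ 0 := by
  by_contra! h
  simpa [h] using hP.2

lemma isDist_uniform {n : ℕ} (hn : 0 < n) : IsDist (fun _ : Fin n => (n : ℝ)⁻¹) :=
  ⟨fun _ => by positivity, by simp [Finset.card_univ, hn.ne']⟩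

lemma IsDist.comp_equiv {κ : Type} [Fintype κ] {P : ι → ℝ} (hP : IsDist P) (e : κ ≃ ι) :
    IsDist (P ∘ e) :=
  ⟨fun x => hP.1 (e x), by rw [← hP.2]; exact e.sum_comp P⟩

lemma isDist_pi [DecidableEq ι] {β : ι → Type} [∀ i, Fintype (β i)] {q : ∀ i, β i → ℝ}
    (hq : ∀ i, IsDist (q i)) : IsDist (fun x : ∀ i, β i => ∏ i, q i (x i)) :=
  ⟨fun x => Finset.prod_nonneg fun i _ => (hq i).1 _, by
    rw [← Fintype.prod_sum]; exact Finset.prod_eq_one fun i _ => (hq i).2⟩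

lemma IsDist.finProd {m n : ℕ} {p : Fin m → ℝ} {q : Fin n → ℝ} (hp : IsDist p)
    (hq : IsDist q) :
    IsDist fun z : Fin (m * n) => p (finProdFinEquiv.symm z).1 * q (finProdFinEquiv.symm z).2 := by
  refine ⟨fun z => mul_nonneg (hp.1 _) (hq.1 _), ?_⟩
  rw [← finProdFinEquiv.sum_comp]
  simp [Fintype.sum_prod_type, ← Finset.mul_sum, hp.2, hq.2]

lemma sum_prod_mul_apply [DecidableEq ι] {β : Type} [Fintype β] (q : ι → β → ℝ) (i₀ : ι)
    (hq : ∀ i ≠ i₀, ∑ y, q i y = 1) (F : β → ℝ) :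
    ∑ x : ι → β, (∏ i, q i (x i)) * F (x i₀) = ∑ y, q i₀ y * F y := by
  have hsplit : ∀ x : ι → β, (∏ i, q i (x i)) * F (x i₀)
      = ∏ i, q i (x i) * (if i = i₀ then F (x i) else 1) := by
    intro x
    rw [Finset.prod_mul_distrib, Finset.prod_ite_eq' Finset.univ i₀, if_pos (Finset.mem_univ _)]
  simp_rw [hsplit]
  rw [← Fintype.prod_sum (fun i y => q i y * if i = i₀ then F y else 1),
    ← Finset.mul_prod_erase _ _ (Finset.mem_univ i₀)]
  rw [Finset.prod_eq_one fun i hi => ?_, mul_one]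
  · simp
  · simpa [Finset.ne_of_mem_erase hi] using hq i (Finset.ne_of_mem_erase hi)

/-- Resampling the coordinates in `s` from their own distributions does not change the
expectation of `F`. -/
lemma sum_prod_mul_sum_resample [DecidableEq ι] {β : ι → Type} [∀ i, Fintype (β i)]
    (q : ∀ i, β i → ℝ) (s : Finset ι) (hq : ∀ i ∈ s, ∑ y, q i y = 1)
    (F : (∀ i, β i) → ℝ) :
    ∑ x : ∀ i, β i, (∏ i, q i (x i)) *
        ∑ j : ∀ i : s, β i,
          (∏ i, q i.1 (j i)) * F (fun i => if h : i ∈ s then j ⟨i, h⟩ else x i)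
      = ∑ x : ∀ i, β i, (∏ i, q i (x i)) * F x := by
  set e := Equiv.piEquivPiSubtypeProd (· ∈ s) β
  have hweight : ∀ a b, ∏ i, q i (e.symm (a, b) i)
      = (∏ i : s, q i.1 (a i)) * ∏ i : {i // i ∉ s}, q i.1 (b i) := by
    intro a b
    rw [← Finset.prod_mul_prod_compl s, ← Finset.prod_coe_sort s,
      Finset.prod_subtype sᶜ (fun _ => Finset.mem_compl)]
    congr 1 <;> refine Finset.prod_congr rfl fun i _ => ?_ <;> simp [e, i.2]
  have hresample : ∀ a b j, (fun i => if h : i ∈ s then j ⟨i, h⟩ else e.symm (a, b) i)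
      = e.symm (j, b) := by
    intro a b j; funext i; by_cases h : i ∈ s <;> simp [e, h]
  have hmass : ∑ a : ∀ i : s, β i, ∏ i, q i.1 (a i) = 1 := by
    rw [← Fintype.prod_sum]; exact Finset.prod_eq_one fun i _ => hq i i.2
  rw [← e.symm.sum_comp, ← e.symm.sum_comp]
  simp only [Fintype.sum_prod_type, hweight, hresample]
  simp_rw [mul_assoc, ← Finset.mul_sum]
  rw [← Finset.sum_mul, hmass, one_mul]
  simp_rw [Finset.mul_sum]
  rw [Finset.sum_comm]
  exact Finset.sum_congr rfl fun b _ => Finset.sum_congr rfl fun j _ => by ring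

end FiniteDistributions

namespace pDAG

variable {V L : Type}

/-- The data existentially quantified in `pDAG.Realizable`. -/
structure Model (G : pDAG V L) (c : V → ℕ) where
  k : L → ℕ
  e : V ⊕ L → ℕ
  PE : (a : V ⊕ L) → Fin (e a) → ℝ
  f : (a : V ⊕ L) → ((b : V ⊕ L) → Fin (Sum.elim c k b)) → Fin (e a) → Fin (Sum.elim c k a)
  isDist_PE : ∀ a, IsDist (PE a)
  f_congr : ∀ a g g' ε, (∀ b, G.edge b a → g b = g' b) → f a g ε = f a g' ε

namespace Model

variable {G : pDAG V L} {c : V → ℕ} (m : G.Model c)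

def Consistent (xv : (v : V) → Fin (c v)) (xl : (l : L) → Fin (m.k l))
    (ε : (a : V ⊕ L) → Fin (m.e a)) : Prop :=
  ∀ a, jointVal c m.k xv xl a = m.f a (jointVal c m.k xv xl) (ε a)

-- Nonempty error spaces make the value of such a node a function of its parents.
def IsDeterministicOn (Cs : Finset V) : Prop :=
  ∀ v ∈ Cs, 0 < m.e (.inl v) ∧ ∀ g ε ε', m.f (.inl v) g ε = m.f (.inl v) g ε'

variable [Fintype V] [Fintype L] [DecidableEq V] [DecidableEq L]

-- Without it, `open scoped Classical` would decide `m.Consistent` by `Classical.propDecidable`,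
-- which does not match the instance produced by `Fintype.prod_boole`.
instance (xv : (v : V) → Fin (c v)) (xl : (l : L) → Fin (m.k l))
    (ε : (a : V ⊕ L) → Fin (m.e a)) : Decidable (m.Consistent xv xl ε) :=
  Fintype.decidableForallFintype

def weight (ε : (a : V ⊕ L) → Fin (m.e a)) : ℝ := ∏ a, m.PE a (ε a)

def dist (xv : (v : V) → Fin (c v)) : ℝ :=
  ∑ xl : (l : L) → Fin (m.k l), ∑ ε : (a : V ⊕ L) → Fin (m.e a),
    ∏ a : V ⊕ L,
      (if jointVal c m.k xv xl a = m.f a (jointVal c m.k xv xl) (ε a) then (1:ℝ) else 0)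
        * m.PE a (ε a)

lemma dist_eq (xv : (v : V) → Fin (c v)) :
    m.dist xv = ∑ xl, ∑ ε, m.weight ε * if m.Consistent xv xl ε then 1 else 0 := by
  simp only [dist, weight, Consistent, Finset.prod_mul_distrib, Fintype.prod_boole, mul_comm]

lemma e_pos {xv : (v : V) → Fin (c v)} (h : m.dist xv ≠ 0) (a : V ⊕ L) : 0 < m.e a := by
  obtain ⟨xl, -, hxl⟩ := Finset.exists_ne_zero_of_sum_ne_zero h
  obtain ⟨ε, -, -⟩ := Finset.exists_ne_zero_of_sum_ne_zero hxl
  exact (ε a).pos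

end Model

variable [Fintype V] [Fintype L] [DecidableEq V] [DecidableEq L] {G G₂ : pDAG V L} {c : V → ℕ}
  {P : ((v : V) → Fin (c v)) → ℝ}

theorem realizable_iff : G.Realizable c P ↔ IsDist P ∧ ∃ m : G.Model c, m.dist = P := by
  constructor
  · rintro ⟨hP, k, e, PE, f, hPE, hf, hsum⟩
    exact ⟨hP, ⟨k, e, PE, f, hPE, hf⟩, funext fun xv => (hsum xv).symm⟩
  · rintro ⟨hP, ⟨k, e, PE, f, hPE, hf⟩, rfl⟩
    exact ⟨hP, k, e, PE, f, hPE, hf, fun _ => rfl⟩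

theorem Realizable.mono (h : G.Realizable c P) (hle : ∀ a b, G.edge a b → G₂.edge a b) :
    G₂.Realizable c P := by
  obtain ⟨hP, k, e, PE, f, hPE, hf, hsum⟩ := h
  exact ⟨hP, k, e, PE, f, hPE, fun a g g' ε hg => hf a g g' ε fun b hb => hg b (hle b a hb),
    hsum⟩

end pDAG

def piFinMulEquiv {ι : Type} (n : ι → ℕ) (W : ℕ) :
    (∀ i, Fin (n i)) × (ι → Fin W) ≃ ∀ i, Fin (n i * W) :=
  (Equiv.arrowProdEquivProdArrow ι _ _).symm.trans (Equiv.piCongrRight fun _ => finProdFinEquiv)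

@[simp]
lemma piFinMulEquiv_apply {ι : Type} (n : ι → ℕ) (W : ℕ) (x : ∀ i, Fin (n i)) (y : ι → Fin W)
    (i : ι) : piFinMulEquiv n W (x, y) i = finProdFinEquiv (x i, y i) := rfl

def stripLatent {V L : Type} {c : V → ℕ} {k : L → ℕ} {W : ℕ}
    (g : (b : V ⊕ L) → Fin (Sum.elim c (fun l => k l * W) b)) :
    (b : V ⊕ L) → Fin (Sum.elim c k b)
  | .inl v => g (.inl v)
  | .inr l => (finProdFinEquiv.symm (g (.inr l))).1

lemma stripLatent_eq_of_eq {V L : Type} {c : V → ℕ} {k : L → ℕ} {W : ℕ}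
    {g g' : (b : V ⊕ L) → Fin (Sum.elim c (fun l => k l * W) b)} {b : V ⊕ L}
    (h : g b = g' b) : stripLatent g b = stripLatent g' b := by
  cases b with
  | inl v => exact h
  | inr l => exact congrArg (fun z => (finProdFinEquiv.symm z).1) h

lemma stripLatent_jointVal {V L : Type} {c : V → ℕ} {k : L → ℕ} {W : ℕ}
    (xv : (v : V) → Fin (c v)) (xl : (l : L) → Fin (k l)) (ω : L → Fin W) :
    stripLatent (jointVal c (fun l => k l * W) xv (piFinMulEquiv k W (xl, ω)))
      = jointVal c k xv xl := by
  funext b; cases b <;> simp [stripLatent, jointVal]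

namespace pDAG.Model

variable {V L : Type} [DecidableEq V] [DecidableEq L]
  {G : pDAG V L} {c : V → ℕ} (m : G.Model c) (Cs : Finset V) (M : L)

abbrev ErrorBlock : Type := (a : Cs.map (.inl : V ↪ V ⊕ L)) → Fin (m.e a)

noncomputable def blockCard : ℕ := Fintype.card (m.ErrorBlock Cs)

noncomputable def decodeBlock : Fin (m.blockCard Cs) ≃ m.ErrorBlock Cs :=
  (Fintype.equivFin _).symm

def replaceBlock (ε : (a : V ⊕ L) → Fin (m.e a)) (j : m.ErrorBlock Cs) :
    (a : V ⊕ L) → Fin (m.e a) :=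
  fun a => if h : a ∈ Cs.map .inl then j ⟨a, h⟩ else ε a

noncomputable def noiseWeight (a : V ⊕ L) (y : Fin (m.blockCard Cs)) : ℝ :=
  if a = .inr M then ∏ t, m.PE t.1 (m.decodeBlock Cs y t) else ((m.blockCard Cs : ℝ))⁻¹

lemma blockCard_pos (he : ∀ a, 0 < m.e a) : 0 < m.blockCard Cs :=
  Fintype.card_pos_iff.mpr ⟨fun t => ⟨0, he t⟩⟩

lemma isDist_noiseWeight (he : ∀ a, 0 < m.e a) (a : V ⊕ L) :
    IsDist (m.noiseWeight Cs M a) := by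
  unfold noiseWeight
  split_ifs
  · exact (isDist_pi fun t => m.isDist_PE t.1).comp_equiv (m.decodeBlock Cs)
  · exact isDist_uniform (m.blockCard_pos Cs he)

/-- `M` also draws a block of errors for the nodes of `Cs`, carried as an extra factor of its
value, and the nodes of `Cs` read their errors from there. To keep the types uniform, every latent
value and every error gets this extra factor; away from `M` it is uniform and unused. -/
noncomputable def absorbErrors (hM : ∀ v ∈ Cs, G.edge (.inr M) (.inl v))
    (he : ∀ a, 0 < m.e a) : G.Model c where
  k l := m.k l * m.blockCard Cs
  e a := m.e a * m.blockCard Cs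
  PE a ε := m.PE a (finProdFinEquiv.symm ε).1 * m.noiseWeight Cs M a (finProdFinEquiv.symm ε).2
  f
    | .inl v, g, ε =>
      if hv : v ∈ Cs then
        m.f (.inl v) (stripLatent g)
          (m.decodeBlock Cs (finProdFinEquiv.symm (g (.inr M))).2
            ⟨.inl v, Finset.mem_map_of_mem _ hv⟩)
      else m.f (.inl v) (stripLatent g) (finProdFinEquiv.symm ε).1
    | .inr l, g, ε =>
      finProdFinEquiv (m := m.k l)
        (m.f (.inr l) (stripLatent g) (finProdFinEquiv.symm ε).1, (finProdFinEquiv.symm ε).2)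
  isDist_PE a := (m.isDist_PE a).finProd (m.isDist_noiseWeight Cs M he a)
  f_congr := by
    rintro (v | l) g g' ε hg
    · have hstrip : ∀ b, G.edge b (.inl v) → stripLatent g b = stripLatent g' b :=
        fun b hb => stripLatent_eq_of_eq (hg b hb)
      show (if hv : v ∈ Cs then _ else _) = (if hv : v ∈ Cs then _ else _)
      by_cases hv : v ∈ Cs
      · simp only [hv, ↓reduceDIte]
        rw [hg _ (hM v hv)]
        exact m.f_congr _ _ _ _ hstrip
      · simp only [hv, ↓reduceDIte]
        exact m.f_congr _ _ _ _ hstrip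
    · dsimp only
      rw [m.f_congr _ _ (stripLatent g') _ fun b hb => stripLatent_eq_of_eq (hg b hb)]

variable (hM : ∀ v ∈ Cs, G.edge (.inr M) (.inl v)) (he : ∀ a, 0 < m.e a)

lemma consistent_absorbErrors_iff (xv : (v : V) → Fin (c v)) (xl : (l : L) → Fin (m.k l))
    (ω : L → Fin (m.blockCard Cs)) (ε₁ : (a : V ⊕ L) → Fin (m.e a))
    (ε₂ : V ⊕ L → Fin (m.blockCard Cs)) :
    (m.absorbErrors Cs M hM he).Consistent xv (piFinMulEquiv m.k _ (xl, ω))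
        (piFinMulEquiv m.e _ (ε₁, ε₂)) ↔
      m.Consistent xv xl (m.replaceBlock Cs ε₁ (m.decodeBlock Cs (ω M))) ∧
        ω = fun l => ε₂ (.inr l) := by
  simp only [Consistent, Sum.forall]
  set x := jointVal c m.k xv xl
  set x' := jointVal c (m.absorbErrors Cs M hM he).k xv (piFinMulEquiv m.k _ (xl, ω))
  have hstrip : stripLatent x' = x := stripLatent_jointVal xv xl ω
  have hxM : x' (.inr M) = finProdFinEquiv (xl M, ω M) := rfl
  have hvis : ∀ v, (m.absorbErrors Cs M hM he).f (.inl v) x'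
      (piFinMulEquiv m.e _ (ε₁, ε₂) (.inl v))
      = m.f (.inl v) x (m.replaceBlock Cs ε₁ (m.decodeBlock Cs (ω M)) (.inl v)) := by
    intro v
    show (if hv : v ∈ Cs then _ else _) = _
    by_cases hv : v ∈ Cs <;>
      simp only [replaceBlock, Sum.elim_inl, hv, ↓reduceDIte, hstrip, hxM, piFinMulEquiv_apply,
        Equiv.symm_apply_apply, Finset.mem_map, Function.Embedding.inl_apply, Sum.inl.injEq,
        exists_eq_right] <;>
      rfl
  have hlat : ∀ l, x' (.inr l) = (m.absorbErrors Cs M hM he).f (.inr l) x'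
      (piFinMulEquiv m.e _ (ε₁, ε₂) (.inr l))
      ↔ xl l = m.f (.inr l) x (ε₁ (.inr l)) ∧ ω l = ε₂ (.inr l) := by
    intro l
    show finProdFinEquiv (xl l, ω l)
        = finProdFinEquiv (m := m.k l) (m.f (.inr l) (stripLatent x') _, _) ↔ _
    rw [hstrip, finProdFinEquiv.apply_eq_iff_eq]
    simp only [Prod.ext_iff, piFinMulEquiv_apply, Equiv.symm_apply_apply]
  simp only [hvis, hlat, forall_and, funext_iff]
  simp [x, x', jointVal, replaceBlock, and_assoc]

lemma isDeterministicOn_absorbErrors : (m.absorbErrors Cs M hM he).IsDeterministicOn Cs := by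
  intro v hv
  refine ⟨Nat.mul_pos (he _) (m.blockCard_pos Cs he), fun g ε ε' => ?_⟩
  show (if hv : v ∈ Cs then _ else _) = (if hv : v ∈ Cs then _ else _)
  simp only [hv, ↓reduceDIte]
  rfl

variable [Fintype V] [Fintype L]

lemma weight_absorbErrors (ε₁ : (a : V ⊕ L) → Fin (m.e a))
    (ε₂ : V ⊕ L → Fin (m.blockCard Cs)) :
    (m.absorbErrors Cs M hM he).weight (piFinMulEquiv m.e _ (ε₁, ε₂))
      = m.weight ε₁ * ∏ a, m.noiseWeight Cs M a (ε₂ a) := by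
  simp only [weight, absorbErrors, piFinMulEquiv_apply, Equiv.symm_apply_apply,
    Finset.prod_mul_distrib]

lemma dist_absorbErrors : (m.absorbErrors Cs M hM he).dist = m.dist := by
  funext xv
  rw [dist_eq, dist_eq]
  refine ((piFinMulEquiv m.k _).sum_comp _).symm.trans ?_
  refine (Finset.sum_congr rfl fun xl' _ => ((piFinMulEquiv m.e _).sum_comp _).symm).trans ?_
  simp only [Fintype.sum_prod_type, consistent_absorbErrors_iff, weight_absorbErrors]
  refine Finset.sum_congr rfl fun xl _ => ?_
  rw [Finset.sum_comm]
  refine (Finset.sum_congr rfl fun ε₁ _ => ?_).trans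
    (sum_prod_mul_sum_resample m.PE (Cs.map .inl) (fun a _ => (m.isDist_PE a).2) _)
  rw [Finset.sum_comm]
  -- the extra factors of the latent values are those of their errors
  refine (Finset.sum_congr rfl fun ε₂ _ =>
    Fintype.sum_eq_single (fun l => ε₂ (.inr l)) fun ω hω => ?_).trans ?_
  · simp [hω]
  simp only [and_true, mul_assoc, ← Finset.mul_sum]
  -- of the extra factors of the errors, only that of `M` is read
  rw [sum_prod_mul_apply (m.noiseWeight Cs M) (.inr M)
    (fun a _ => (m.isDist_noiseWeight Cs M he a).2)
    (fun y => if m.Consistent xv xl (m.replaceBlock Cs ε₁ (m.decodeBlock Cs y)) then 1 else 0)]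
  congr 1
  exact Fintype.sum_equiv (m.decodeBlock Cs) _ _ fun y => by rw [noiseWeight, if_pos rfl]; rfl

end pDAG.Model

namespace pDAG

variable {V L : Type}

def deleteEdges (G : pDAG V L) (Cs Ds : Finset V) : pDAG V L where
  edge a b := G.edge a b ∧ ¬ (a ∈ Cs.map .inl ∧ b ∈ Ds.map .inl)
  acyclic := let ⟨r, hr⟩ := G.acyclic; ⟨r, fun a b h => hr a b h.1⟩

namespace Model

variable [DecidableEq V] {G : pDAG V L} {c : V → ℕ} (m : G.Model c)
  {Cs Ds : Finset V} (hdet : m.IsDeterministicOn Cs)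

-- At depth `0`, `g (.inl v)` only witnesses `0 < c v`: the value there must not depend on `g`.
def reconstruct :
    ℕ → ((b : V ⊕ L) → Fin (Sum.elim c m.k b)) → (b : V ⊕ L) → Fin (Sum.elim c m.k b)
  | 0, g, .inl v => if v ∈ Cs then ⟨0, (g (.inl v)).pos⟩ else g (.inl v)
  | n + 1, g, .inl v =>
    if hv : v ∈ Cs then m.f (.inl v) (reconstruct n g) ⟨0, (hdet v hv).1⟩ else g (.inl v)
  | _, g, .inr l => g (.inr l)

lemma reconstruct_of_not_mem {b : V ⊕ L} (hb : b ∉ Cs.map .inl) (n : ℕ)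
    (g : (b : V ⊕ L) → Fin (Sum.elim c m.k b)) : m.reconstruct hdet n g b = g b := by
  cases b with
  | inl v =>
    have hv : v ∉ Cs := fun hv => hb (Finset.mem_map_of_mem _ hv)
    cases n
    · exact if_neg hv
    · exact dif_neg hv
  | inr l => cases n <;> rfl

lemma reconstruct_congr {g g' : (b : V ⊕ L) → Fin (Sum.elim c m.k b)}
    (hg : ∀ b ∉ Cs.map .inl, (∃ v ∈ Cs, G.edge b (.inl v)) → g b = g' b) (n : ℕ) :
    ∀ v ∈ Cs, m.reconstruct hdet n g (.inl v) = m.reconstruct hdet n g' (.inl v) := by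
  induction n with
  | zero => intro v hv; simp [reconstruct, hv]
  | succ n ih =>
    intro v hv
    simp only [reconstruct, hv, ↓reduceDIte]
    refine m.f_congr _ _ _ _ fun b hb => ?_
    by_cases hbC : b ∈ Cs.map .inl
    · obtain ⟨w, hw, rfl⟩ := Finset.mem_map.mp hbC
      exact ih w hw
    · rw [m.reconstruct_of_not_mem hdet hbC, m.reconstruct_of_not_mem hdet hbC]
      exact hg b hbC ⟨v, hv, hb⟩

lemma reconstruct_eq_self {r : V ⊕ L → ℕ} (hr : ∀ a b, G.edge a b → r a < r b)
    {g : (b : V ⊕ L) → Fin (Sum.elim c m.k b)}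
    (hg : ∀ v ∈ Cs, ∃ ε, g (.inl v) = m.f (.inl v) g ε) (n : ℕ) :
    ∀ b, r b < n → m.reconstruct hdet n g b = g b := by
  induction n with
  | zero => intro b hb; omega
  | succ n ih =>
    rintro (v | l) hv
    · by_cases hvC : v ∈ Cs
      · obtain ⟨ε, hε⟩ := hg v hvC
        simp only [reconstruct, hvC, ↓reduceDIte]
        rw [hε, (hdet v hvC).2 _ _ ε]
        exact m.f_congr _ _ _ _ fun b hb => ih b (by have := hr b _ hb; omega)
      · exact m.reconstruct_of_not_mem hdet (by simpa using hvC) _ _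
    · rfl

def dropEdges [DecidableEq L]
    (hpar : ∀ d ∈ Ds, ∀ v ∈ Cs, ∀ b, G.edge b (.inl v) → G.edge b (.inl d)) (N : ℕ) :
    (G.deleteEdges Cs Ds).Model c where
  k := m.k
  e := m.e
  PE := m.PE
  f a g ε := if a ∈ Ds.map .inl then m.f a (m.reconstruct hdet N g) ε else m.f a g ε
  isDist_PE := m.isDist_PE
  f_congr := by
    intro a g g' ε hg
    split_ifs with ha
    · obtain ⟨d, hd, rfl⟩ := Finset.mem_map.mp ha
      refine m.f_congr _ _ _ _ fun b hb => ?_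
      by_cases hbC : b ∈ Cs.map .inl
      · obtain ⟨v, hv, rfl⟩ := Finset.mem_map.mp hbC
        refine m.reconstruct_congr hdet (fun b' hb'C ⟨w, hw, hb'⟩ => ?_) N v hv
        exact hg b' ⟨hpar d hd w hw b' hb', fun h => hb'C h.1⟩
      · rw [m.reconstruct_of_not_mem hdet hbC, m.reconstruct_of_not_mem hdet hbC]
        exact hg b ⟨hb, fun h => hbC h.1⟩
    · exact m.f_congr _ _ _ _ fun b hb => hg b ⟨hb, fun h => ha h.2⟩

section
variable [DecidableEq L] (hpar : ∀ d ∈ Ds, ∀ v ∈ Cs, ∀ b, G.edge b (.inl v) → G.edge b (.inl d))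
  {N : ℕ}

lemma dropEdges_consistent_iff (hdisj : Disjoint Cs Ds) {r : V ⊕ L → ℕ}
    (hr : ∀ a b, G.edge a b → r a < r b) (hN : ∀ b, r b < N) (xv : (v : V) → Fin (c v))
    (xl : (l : L) → Fin ((m.dropEdges hdet hpar N).k l))
    (ε : (a : V ⊕ L) → Fin ((m.dropEdges hdet hpar N).e a)) :
    (m.dropEdges hdet hpar N).Consistent xv xl ε ↔ m.Consistent xv xl ε := by
  set x := jointVal c m.k xv xl
  have hC : ∀ v ∈ Cs, (m.dropEdges hdet hpar N).f (.inl v) x (ε (.inl v))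
      = m.f (.inl v) x (ε (.inl v)) :=
    fun v hv => if_neg (by simpa using Finset.disjoint_left.mp hdisj hv)
  have hall : (∀ v ∈ Cs, x (.inl v) = m.f (.inl v) x (ε (.inl v))) →
      ∀ a, (m.dropEdges hdet hpar N).f a x (ε a) = m.f a x (ε a) := by
    intro h a
    have hrec := m.reconstruct_eq_self hdet hr (fun v hv => ⟨_, h v hv⟩) N
    show (if a ∈ Ds.map .inl then _ else _) = _
    rw [funext fun b => hrec b (hN b)]
    exact ite_self _
  exact ⟨fun h a => (h a).trans (hall (fun v hv => (h _).trans (hC v hv)) a),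
    fun h a => (h a).trans (hall (fun v hv => h _) a).symm⟩

lemma dist_dropEdges [Fintype V] [Fintype L] (hdisj : Disjoint Cs Ds) {r : V ⊕ L → ℕ}
    (hr : ∀ a b, G.edge a b → r a < r b) (hN : ∀ b, r b < N) :
    (m.dropEdges hdet hpar N).dist = m.dist := by
  funext xv
  simp only [dist_eq, m.dropEdges_consistent_iff hdet hpar hdisj hr hN]
  refine Finset.sum_congr rfl fun xl _ => Finset.sum_congr rfl fun ε _ => ?_
  by_cases h : m.Consistent xv xl ε <;> simp only [h, ↓reduceIte] <;> rfl

end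

end Model

end pDAG

namespace pDAG

variable {V L : Type} [Fintype V] [Fintype L] [DecidableEq V] [DecidableEq L] {G : pDAG V L}
  {c : V → ℕ} {P : ((v : V) → Fin (c v)) → ℝ} {Cs Ds : Finset V}

theorem Realizable.deleteEdges (h : G.Realizable c P) (M : L)
    (hM : ∀ v ∈ Cs, G.edge (.inr M) (.inl v))
    (hpar : ∀ d ∈ Ds, ∀ v ∈ Cs, ∀ b, G.edge b (.inl v) → G.edge b (.inl d))
    (hdisj : Disjoint Cs Ds) : (G.deleteEdges Cs Ds).Realizable c P := by
  obtain ⟨hP, m, rfl⟩ := realizable_iff.mp h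
  obtain ⟨xv, hxv⟩ := hP.exists_ne_zero
  have he := m.e_pos hxv
  obtain ⟨r, hr⟩ := G.acyclic
  have hN : ∀ b, r b < Finset.univ.sup r + 1 :=
    fun b => Nat.lt_succ_of_le (Finset.le_sup (Finset.mem_univ b))
  refine realizable_iff.mpr ⟨hP, (m.absorbErrors Cs M hM he).dropEdges
    (m.isDeterministicOn_absorbErrors Cs M hM he) hpar (Finset.univ.sup r + 1), ?_⟩
  rw [Model.dist_dropEdges _ _ _ hdisj hr hN, Model.dist_absorbErrors]

end pDAG

namespace mDAG

variable {V : Type}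

def deleteEdges (G : mDAG V) (Cs Ds : Finset V) : mDAG V where
  edge u v := G.edge u v ∧ ¬ (u ∈ Cs ∧ v ∈ Ds)
  acyclic := let ⟨r, hr⟩ := G.acyclic; ⟨r, fun a b h => hr a b h.1⟩
  faces := G.faces
  singleton_mem := G.singleton_mem
  down_closed := G.down_closed

lemma ext {G₁ G₂ : mDAG V} (hE : ∀ u v, G₁.edge u v ↔ G₂.edge u v)
    (hF : G₁.faces = G₂.faces) : G₁ = G₂ := by
  cases G₁; cases G₂
  cases hF
  congr
  funext u v
  exact propext (hE u v)

lemma canon_deleteEdges_edge_iff {G : mDAG V} {Cs Ds : Finset V} {a b : V ⊕ G.Facets} :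
    (G.deleteEdges Cs Ds).canon.edge a b ↔ (G.canon.deleteEdges Cs Ds).edge a b := by
  rcases a with u | A <;> rcases b with v | B <;>
    simp [canon, deleteEdges, pDAG.deleteEdges, Finset.mem_map]
  exact fun _ => ⟨fun h x hx hxu => h (hxu ▸ hx), fun h hu => h _ hu rfl⟩

lemma exists_isFacet_superset (G : mDAG V) {B : Finset V} (hB : B ∈ G.faces) :
    ∃ A, G.IsFacet A ∧ B ⊆ A := by
  obtain ⟨A, hBA, hA⟩ := G.faces.exists_le_maximal hB
  exact ⟨A, ⟨hA.1, fun B hB hAB => le_antisymm hAB (hA.2 hB hAB)⟩, hBA⟩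

variable [DecidableEq V] {G G' : mDAG V} {C Df : Finset V}

lemma isFacet_union (hfaces : G'.faces = G.faces ∪ (C ∪ Df).powerset) (hDf : G.IsFacet Df) :
    G'.IsFacet (C ∪ Df) := by
  rw [IsFacet, hfaces]
  refine ⟨Finset.mem_union_right _ (Finset.mem_powerset_self _), fun B hB hsub => ?_⟩
  rcases Finset.mem_union.mp hB with hB | hB
  · have hDfB : Df = B := hDf.2 B hB (Finset.subset_union_right.trans hsub)
    exact le_antisymm hsub (hDfB ▸ Finset.subset_union_right)
  · exact le_antisymm hsub (Finset.mem_powerset.mp hB)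

lemma eq_union_of_mem_isFacet (hfaces : G'.faces = G.faces ∪ (C ∪ Df).powerset)
    (h2 : ∀ c ∈ C, ∀ A : Finset V, G.IsFacet A → c ∈ A → A = C) {x : V} (hx : x ∈ C)
    {A : Finset V} (hA : G'.IsFacet A) (hxA : x ∈ A) : A = C ∪ Df := by
  have hunion : C ∪ Df ∈ G'.faces := by
    rw [hfaces]; exact Finset.mem_union_right _ (Finset.mem_powerset_self _)
  refine hA.2 _ hunion ?_
  have hA' := hA.1
  rw [hfaces] at hA'
  rcases Finset.mem_union.mp hA' with hA' | hA'
  · obtain ⟨B, hB, hAB⟩ := G.exists_isFacet_superset hA'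
    rw [h2 x hx B hB (hAB hxA)] at hAB
    exact hAB.trans Finset.subset_union_left
  · exact Finset.mem_powerset.mp hA'

end mDAG

theorem weak_fm_and_hlp_subsume_evans_general
    {V : Type} [Fintype V] [DecidableEq V] (G G' G'' : mDAG V) (C Df : Finset V)
    (hDf : G.IsFacet Df) (hdisj : Disjoint C Df)
    (h1 : ∀ d ∈ Df, (∀ x ∈ C, G.edge x d) ∧
      ∀ p : V, (∃ x ∈ C, G.edge p x) → G.edge p d)
    (h2 : ∀ c ∈ C, ∀ A : Finset V, G.IsFacet A → c ∈ A → A = C)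
    (hedge' : ∀ a b : V, G'.edge a b ↔ G.edge a b)
    (hfaces' : G'.faces = G.faces ∪ (C ∪ Df).powerset)
    (hedge'' : ∀ a b : V, G''.edge a b ↔ (G.edge a b ∧ ¬(a ∈ C ∧ b ∈ Df)))
    (hfaces'' : G''.faces = G.faces ∪ (C ∪ Df).powerset) :
    G'.ObsEquiv G'' := by
  obtain rfl : G'' = G'.deleteEdges C Df :=
    mDAG.ext (fun u v => by simp [mDAG.deleteEdges, hedge', hedge''])
      (hfaces''.trans hfaces'.symm)
  have hpar : ∀ d ∈ Df, ∀ v ∈ C, ∀ b, G'.canon.edge b (.inl v) → G'.canon.edge b (.inl d) := by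
    rintro d hd v hv (p | A) hb
    · exact (hedge' p d).2 ((h1 d hd).2 p ⟨v, hv, (hedge' p v).1 hb⟩)
    · show d ∈ A.1
      rw [mDAG.eq_union_of_mem_isFacet hfaces' h2 hv A.2 hb]
      exact Finset.mem_union_right _ hd
  intro c P
  constructor
  · intro hP
    exact (pDAG.Realizable.deleteEdges hP ⟨C ∪ Df, mDAG.isFacet_union hfaces' hDf⟩
      (fun v hv => Finset.mem_union_left _ hv) hpar hdisj).mono
        fun a b h => mDAG.canon_deleteEdges_edge_iff.2 h
  · intro hP
    exact pDAG.Realizable.mono hP fun a b h => (mDAG.canon_deleteEdges_edge_iff.1 h).1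

/-- Let `G = (D, B)` be an mDAG with two disjoint facets `C` and `Df`
satisfying (1) for each `d ∈ Df`, every element of `C` and every parent (in `D`) of an
element of `C` is a parent of `d`, and (2) for every `c ∈ C`, `C` is the only facet
containing `c`.  Let `G'` be `G` with the facet `C ∪ Df` (and all its subsets) added to
the simplicial complex, and let `G''` be `G'` with every directed edge `c → d`
(`c ∈ C`, `d ∈ Df`) removed.  Then `G'` and `G''` are observationally equivalent
(so Evans' rule is subsumed by weak facet-merging followed by the HLP edge-adding
rule). -/
theorem weak_fm_and_hlp_subsume_evans
    {V : Type} [Fintype V] [DecidableEq V] (G G' G'' : mDAG V) (C Df : Finset V)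
    (hC : G.IsFacet C) (hDf : G.IsFacet Df) (hdisj : Disjoint C Df)
    (h1 : ∀ d ∈ Df, (∀ x ∈ C, G.edge x d) ∧
      ∀ p : V, (∃ x ∈ C, G.edge p x) → G.edge p d)
    (h2 : ∀ c ∈ C, ∀ A : Finset V, G.IsFacet A → c ∈ A → A = C)
    (hedge' : ∀ a b : V, G'.edge a b ↔ G.edge a b)
    (hfaces' : G'.faces = G.faces ∪ (C ∪ Df).powerset)
    (hedge'' : ∀ a b : V, G''.edge a b ↔ (G.edge a b ∧ ¬(a ∈ C ∧ b ∈ Df)))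
    (hfaces'' : G''.faces = G.faces ∪ (C ∪ Df).powerset) :
    G'.ObsEquiv G'' :=
  weak_fm_and_hlp_subsume_evans_general G G' G'' C Df hDf hdisj h1 h2 hedge' hfaces' hedge''
    hfaces''
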